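/- The function H2(x,y,z) = x(ax−2by+2cz) is a constant of motion of the Lotka–Volterra type system ẋ = x(by+cz), ẏ = y(ax−by+cz), ż = z(−ax+by−cz): for every differentiable curve γ : ℝ → ℝ³, γ = (x,y,z), satisfying the system for all t, the function t ↦ x(t)(a·x(t)−2b·y(t)+2c·z(t)) is constant. -/

import Mathlib

/-! `H₂` is a first integral: its derivative along the vector field of the system is a
polynomial in `x, y, z` that vanishes identically, so along a solution `H₂` has derivative
zero on all of `ℝ` and is therefore constant. -/

def lotkaVolterraH2 (a b c x y z : ℝ) : ℝ := x * (a * x - 2 * b * y + 2 * c * z)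

theorem hasDerivAt_lotkaVolterraH2_of_solution {a b c : ℝ} {x y z : ℝ → ℝ} {t : ℝ}
    (hx : HasDerivAt x (x t * (b * y t + c * z t)) t)
    (hy : HasDerivAt y (y t * (a * x t - b * y t + c * z t)) t)
    (hz : HasDerivAt z (z t * (-(a * x t) + b * y t - c * z t)) t) :
    HasDerivAt (fun s => lotkaVolterraH2 a b c (x s) (y s) (z s)) 0 t := by
  refine (hx.fun_mul (((hx.const_mul a).fun_sub (hy.const_mul (2 * b))).fun_add
    (hz.const_mul (2 * c)))).congr_deriv ?_
  ring

theorem H2_constant_of_motion (a b c : ℝ)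
    (x y z : ℝ → ℝ)
    (hx : ∀ t, HasDerivAt x (x t * (b * y t + c * z t)) t)
    (hy : ∀ t, HasDerivAt y (y t * (a * x t - b * y t + c * z t)) t)
    (hz : ∀ t, HasDerivAt z (z t * (-(a * x t) + b * y t - c * z t)) t) :
    ∀ s t : ℝ, x s * (a * x s - 2 * b * y s + 2 * c * z s)
             = x t * (a * x t - 2 * b * y t + 2 * c * z t) := by
  have hH (t : ℝ) := hasDerivAt_lotkaVolterraH2_of_solution (hx t) (hy t) (hz t)
  exact is_const_of_deriv_eq_zero (fun t => (hH t).differentiableAt) (fun t => (hH t).deriv)
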